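/- Let p be a prime, S a group, and R a normal subgroup of S with R ≤ S^{(2)}. If R^{(n,S)} ∩ S^{(n+2)} ≤ R^{(n+1,S)} for all n ≥ 1, then R^{(n,S)} = R ∩ S^{(n+1)} for all n ≥ 1. -/

import Mathlib

open scoped commutatorElement

/-- The subgroup generated by all `p`-th powers of elements of `H` together with all
commutators `⁅h, g⁆ = h * g * h⁻¹ * g⁻¹` with `h ∈ H` and `g` in the ambient group. -/
def pStep (p : ℕ) {G : Type*} [Group G] (H : Subgroup G) : Subgroup G :=
  Subgroup.closure ({x : G | ∃ h ∈ H, x = h ^ p} ∪ {x : G | ∃ h ∈ H, ∃ g : G, x = ⁅h, g⁆})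

/-- `pSeries p H n` is the filtration `H^{(n,G)}`: `H^{(1,G)} = H` and
`H^{(n+1,G)} = (H^{(n,G)})^p [H^{(n,G)}, G]`.  Taking `H = ⊤` gives the lower
`p`-central series `G^{(n)}` of `G` (with `G^{(1)} = G`). -/
def pSeries (p : ℕ) {G : Type*} [Group G] (H : Subgroup G) : ℕ → Subgroup G
  | 0 => H
  | 1 => H
  | (n + 2) => pStep p (pSeries p H (n + 1))

/-! The inclusion `R^{(n,S)} ≤ R ∩ S^{(n+1)}` follows from `R ≤ S^{(2)}` by monotonicity of
the `p`-step. The reverse inclusion is an induction on `n`: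
`R ∩ S^{(n+2)} ≤ R^{(n,S)} ∩ S^{(n+2)} ≤ R^{(n+1,S)}`, the first step because the lower
`p`-central series decreases. -/

section pSeries

variable {p : ℕ} {G : Type*} [Group G]

lemma pStep_mono {H K : Subgroup G} (h : H ≤ K) : pStep p H ≤ pStep p K := by
  apply Subgroup.closure_mono
  rintro x (⟨a, ha, rfl⟩ | ⟨a, ha, g, rfl⟩)
  · exact Or.inl ⟨a, h ha, rfl⟩
  · exact Or.inr ⟨a, h ha, g, rfl⟩

lemma pStep_le_of_le {H K : Subgroup G} [hK : K.Normal] (h : H ≤ K) : pStep p H ≤ K := by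
  rw [pStep, Subgroup.closure_le]
  rintro x (⟨a, ha, rfl⟩ | ⟨a, ha, g, rfl⟩)
  · exact pow_mem (h ha) p
  · rw [commutatorElement_def, mul_assoc, mul_assoc]
    exact mul_mem (h ha) (by simpa [mul_assoc] using hK.conj_mem _ (inv_mem (h ha)) g)

lemma pSeries_succ_le (H : Subgroup G) (h : pStep p H ≤ H) :
    ∀ n, pSeries p H (n + 1) ≤ pSeries p H n
  | 0 => le_rfl
  | 1 => h
  | n + 2 => pStep_mono (pSeries_succ_le H h (n + 1))

lemma pSeries_antitone (H : Subgroup G) (h : pStep p H ≤ H) : Antitone (pSeries p H) :=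
  antitone_nat_of_succ_le (pSeries_succ_le H h)

lemma pSeries_le_self (H : Subgroup G) [H.Normal] (n : ℕ) : pSeries p H n ≤ H :=
  pSeries_antitone H (pStep_le_of_le le_rfl) (Nat.zero_le n)

lemma pSeries_top_succ_le (n : ℕ) :
    pSeries p (⊤ : Subgroup G) (n + 1) ≤ pSeries p ⊤ n :=
  pSeries_succ_le ⊤ le_top n

lemma pSeries_le_pSeries_add {H K : Subgroup G} {m : ℕ} (h : H ≤ pSeries p K (m + 1)) :
    ∀ n, pSeries p H (n + 1) ≤ pSeries p K (m + n + 1)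
  | 0 => h
  | n + 1 => pStep_mono (pSeries_le_pSeries_add h n)

end pSeries

theorem stmt6_general (p : ℕ) {S : Type*} [Group S] (R : Subgroup S) [R.Normal]
    (hR : R ≤ pSeries p (⊤ : Subgroup S) 2)
    (hinj : ∀ n : ℕ, 1 ≤ n →
      pSeries p R n ⊓ pSeries p (⊤ : Subgroup S) (n + 2) ≤ pSeries p R (n + 1)) :
    ∀ n : ℕ, 1 ≤ n → pSeries p R n = R ⊓ pSeries p (⊤ : Subgroup S) (n + 1) := by
  have inf_le_pSeries : ∀ k, R ⊓ pSeries p ⊤ (k + 2) ≤ pSeries p R (k + 1) := by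
    intro k
    induction k with
    | zero => exact inf_le_left
    | succ k ih =>
      calc R ⊓ pSeries p ⊤ (k + 3)
          ≤ pSeries p R (k + 1) ⊓ pSeries p ⊤ (k + 3) :=
            le_inf (le_trans (inf_le_inf_left R (pSeries_top_succ_le _)) ih) inf_le_right
        _ ≤ pSeries p R (k + 2) := hinj (k + 1) (by omega)
  intro n hn
  obtain ⟨k, rfl⟩ := Nat.exists_eq_add_of_le' hn
  exact le_antisymm
    (le_inf (pSeries_le_self R _) (add_comm 1 k ▸ pSeries_le_pSeries_add hR k))
    (inf_le_pSeries k)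

/-- The purely algebraic implication (B) ⇒ (A) of Theorem 3.1: if `R` is a normal
subgroup of `S` with `R ≤ S^{(2)}` and `R^{(n,S)} ∩ S^{(n+2)} ≤ R^{(n+1,S)}` for all
`n ≥ 1`, then `R^{(n,S)} = R ∩ S^{(n+1)}` for all `n ≥ 1`. -/
theorem stmt6 (p : ℕ) (hp : p.Prime) {S : Type*} [Group S] (R : Subgroup S) [R.Normal]
    (hR : R ≤ pSeries p (⊤ : Subgroup S) 2)
    (hinj : ∀ n : ℕ, 1 ≤ n →
      pSeries p R n ⊓ pSeries p (⊤ : Subgroup S) (n + 2) ≤ pSeries p R (n + 1)) :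
    ∀ n : ℕ, 1 ≤ n → pSeries p R n = R ⊓ pSeries p (⊤ : Subgroup S) (n + 1) :=
  stmt6_general p R hR hinj
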